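/- For m ≥ 2 and n ≥ 5, the number of distinct Type I(a) tandems occurring in the Fibonacci array f_{m,n} equals D(n)·p(f_m); here the count of distinct Type I(a) tandems is the sum over all sizes (r,2l) with r,l ≥ 1 of the number of distinct r × 2l arrays X such that X occurs as a subarray of f_{m,n} and the left r × l half of X equals its right r × l half, D(n) is the number of distinct squares that are factors of the 1D Fibonacci word f_n, and p(f_m) is the number of distinct nonempty factors of f_m. -/

import Mathlib

/-- Fibonacci numbers: F(0)=1, F(1)=1, F(n+2)=F(n+1)+F(n). -/
def F : ℕ → ℕ
  | 0 => 1
  | 1 => 1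
  | n + 2 => F (n + 1) + F n

/-- Finite Fibonacci words over {a,b} coded as Fin 2 (a=0, b=1). -/
def fibWord : ℕ → List (Fin 2)
  | 0 => [0]
  | 1 => [1]
  | n + 2 => fibWord (n + 1) ++ fibWord n

/-- The Fibonacci arrays f_{m,n} over {a,b,c,d} coded as Fin 2 × Fin 2,
with a=(0,0), b=(0,1), c=(1,0), d=(1,1); `fibArr m n i j` is the (i,j) entry
(0-indexed, only indices i < F m, j < F n are meaningful). -/
def fibArr : ℕ → ℕ → ℕ → ℕ → Fin 2 × Fin 2
  | 0, 0, _, _ => (0, 0)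
  | 0, 1, _, _ => (0, 1)
  | 1, 0, _, _ => (1, 0)
  | 1, 1, _, _ => (1, 1)
  | 0, n + 2, i, j =>
      if j < F (n + 1) then fibArr 0 (n + 1) i j else fibArr 0 n i (j - F (n + 1))
  | 1, n + 2, i, j =>
      if j < F (n + 1) then fibArr 1 (n + 1) i j else fibArr 1 n i (j - F (n + 1))
  | m + 2, k, i, j =>
      if i < F (m + 1) then fibArr (m + 1) k i j else fibArr m k (i - F (m + 1)) j
  termination_by m n => (m, n)

/-- The r × l subarray of u with top-left entry at (i,j). -/
def subarr (u : ℕ → ℕ → Fin 2 × Fin 2) (i j r l : ℕ) : Fin r × Fin l → Fin 2 × Fin 2 :=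
  fun p => u (i + p.1.val) (j + p.2.val)

/-- Number of square occurrences in a finite word. -/
noncomputable def sqOcc (w : List (Fin 2)) : ℕ :=
  {p : ℕ × ℕ | 1 ≤ p.2 ∧ p.1 + 2 * p.2 ≤ w.length ∧
    ∀ t < p.2, w.getD (p.1 + t) 0 = w.getD (p.1 + p.2 + t) 0}.ncard

/-- R(n): number of square occurrences in f_n. -/
noncomputable def R (n : ℕ) : ℕ := sqOcc (fibWord n)

/-- Number of distinct nonempty factors of a word. -/
noncomputable def pFact (w : List (Fin 2)) : ℕ :=
  {v : List (Fin 2) | v ≠ [] ∧ v <:+: w}.ncard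

/-- D(n): number of distinct (nonempty) squares xx occurring as factors of f_n. -/
noncomputable def D (n : ℕ) : ℕ :=
  {x : List (Fin 2) | x ≠ [] ∧ x ++ x <:+: fibWord n}.ncard

/-- The r × c array X occurs as a subarray of the Fibonacci array f_{m,n}. -/
def occursIn (m n r c : ℕ) (X : Fin r × Fin c → Fin 2 × Fin 2) : Prop :=
  ∃ i j, i + r ≤ F m ∧ j + c ≤ F n ∧
    ∀ p : Fin r × Fin c, X p = fibArr m n (i + p.1.val) (j + p.2.val)

/-!
Inside its bounds, `f_{m,n}` is the outer product of the words `f_m` (down the rows) and `f_n`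
(along the columns): the entry at `(i, j)` is `(f_m[i], f_n[j])`. Hence an `r × c` subarray is
the outer product of a factor `y` of `f_m` of length `r` and a factor `z` of `f_n` of length `c`,
and when `r ≥ 1` its two halves agree exactly when `z = xx` is a square. The tandem is recovered
from `(x, y)` (its first row gives `x`, its first column `y`), so the tandems are in bijection
with the pairs (nonempty `x` with `xx` a factor of `f_n`, nonempty factor `y` of `f_m`).
-/

theorem fibWord_length : ∀ n, (fibWord n).length = F n
  | 0 => rfl
  | 1 => rfl
  | n + 2 => by simp [fibWord, F, fibWord_length (n + 1), fibWord_length n]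

theorem getD_fibWord_add_two (n j : ℕ) :
    (fibWord (n + 2)).getD j 0 =
      if j < F (n + 1) then (fibWord (n + 1)).getD j 0 else (fibWord n).getD (j - F (n + 1)) 0 := by
  rw [fibWord]
  split_ifs with h
  · exact List.getD_append _ _ _ _ (by rwa [fibWord_length])
  · rw [List.getD_append_right _ _ _ _ (by rw [fibWord_length]; omega), fibWord_length]

theorem fibArr_eq_getD : ∀ m n i j, i < F m → j < F n →
    fibArr m n i j = ((fibWord m).getD i 0, (fibWord n).getD j 0)
  | 0, 0, i, j, hi, hj | 0, 1, i, j, hi, hj | 1, 0, i, j, hi, hj | 1, 1, i, j, hi, hj => by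
    obtain rfl := Nat.lt_one_iff.mp hi
    obtain rfl := Nat.lt_one_iff.mp hj
    rw [fibArr]; rfl
  | 0, n + 2, i, j, hi, hj | 1, n + 2, i, j, hi, hj => by
    rw [F] at hj
    rw [fibArr, getD_fibWord_add_two]
    split_ifs with h
    · exact fibArr_eq_getD _ (n + 1) i j hi h
    · exact fibArr_eq_getD _ n i _ hi (by omega)
  | m + 2, k, i, j, hi, hj => by
    rw [F] at hi
    rw [fibArr, getD_fibWord_add_two]
    split_ifs with h
    · exact fibArr_eq_getD (m + 1) k i j h hj
    · exact fibArr_eq_getD m k _ j (by omega) hj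
  termination_by m n => (m, n)

namespace List

variable {α : Type*}

theorem infix_iff_getD {v w : List α} (d : α) : v <:+: w ↔
    ∃ k, k + v.length ≤ w.length ∧ ∀ i < v.length, v.getD i d = w.getD (k + i) d := by
  rw [infix_iff_getElem?]
  refine exists_congr fun k => ⟨fun ⟨hk, h⟩ => ⟨by omega, fun i hi => ?_⟩,
    fun ⟨hk, h⟩ => ⟨by omega, fun i hi => ?_⟩⟩
  · rw [getD_eq_getElem?_getD, getD_eq_getElem?_getD, Nat.add_comm, h i hi]
    simp [hi]
  · have := h i hi
    rw [getD_eq_getElem _ _ hi, getD_eq_getElem _ _ (by omega)] at this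
    simp [this, Nat.add_comm]

theorem exists_infix_getD_eq {w : List α} (d : α) {k c : ℕ} (h : k + c ≤ w.length) :
    ∃ v, v <:+: w ∧ v.length = c ∧ ∀ i < c, v.getD i d = w.getD (k + i) d :=
  ⟨(w.drop k).take c, (take_prefix _ _).isInfix.trans (drop_suffix _ _).isInfix,
    by simp; omega, fun i hi => by simp [getD_eq_getElem?_getD, hi]⟩

theorem exists_eq_append_self_of_getD {z : List α} (d : α) {l : ℕ} (hz : z.length = 2 * l)
    (h : ∀ i < l, z.getD i d = z.getD (i + l) d) : ∃ x, z = x ++ x := by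
  refine ⟨z.take l, ?_⟩
  conv_lhs => rw [← take_append_drop l z]
  congr 1
  refine ext_getElem (by simp; omega) fun i h₁ h₂ => ?_
  have hi : i < l := by simp at h₂; omega
  rw [getElem_drop, getElem_take, ← getD_eq_getElem _ d, ← getD_eq_getElem _ d, h i hi,
    Nat.add_comm]

end List

def prodArr (y z : List (Fin 2)) (r c : ℕ) : Fin r × Fin c → Fin 2 × Fin 2 :=
  fun p => (y.getD p.1 0, z.getD p.2 0)

theorem occursIn_iff {m n r c : ℕ} {X : Fin r × Fin c → Fin 2 × Fin 2} :
    occursIn m n r c X ↔ ∃ y z, y <:+: fibWord m ∧ y.length = r ∧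
      z <:+: fibWord n ∧ z.length = c ∧ X = prodArr y z r c := by
  constructor
  · rintro ⟨i, j, hi, hj, hX⟩
    rw [← fibWord_length] at hi hj
    obtain ⟨y, hy, hyr, hyX⟩ := List.exists_infix_getD_eq 0 hi
    obtain ⟨z, hz, hzc, hzX⟩ := List.exists_infix_getD_eq 0 hj
    refine ⟨y, z, hy, hyr, hz, hzc, funext fun p => ?_⟩
    rw [hX, prodArr, hyX _ p.1.2, hzX _ p.2.2, fibArr_eq_getD]
    · rw [← fibWord_length]; omega
    · rw [← fibWord_length]; omega
  · rintro ⟨y, z, hy, rfl, hz, rfl, rfl⟩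
    obtain ⟨i, hi, hyw⟩ := (List.infix_iff_getD 0).1 hy
    obtain ⟨j, hj, hzw⟩ := (List.infix_iff_getD 0).1 hz
    rw [fibWord_length] at hi hj
    refine ⟨i, j, hi, hj, fun p => ?_⟩
    rw [prodArr, hyw _ p.1.2, hzw _ p.2.2, fibArr_eq_getD _ _ _ _ (by omega) (by omega)]

abbrev DoubleWidthArray := (r : ℕ) × (l : ℕ) × (Fin r × Fin (2 * l) → Fin 2 × Fin 2)

def tandems (m n : ℕ) : Set DoubleWidthArray :=
  {x | 1 ≤ x.1 ∧ 1 ≤ x.2.1 ∧ occursIn m n x.1 (2 * x.2.1) x.2.2 ∧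
    ∀ (p : Fin x.1) (q : Fin x.2.1),
      x.2.2 (p, ⟨q.val, by have := q.isLt; omega⟩)
        = x.2.2 (p, ⟨q.val + x.2.1, by have := q.isLt; omega⟩)}

def tandemOfWords (x y : List (Fin 2)) : DoubleWidthArray :=
  ⟨y.length, x.length, prodArr y (x ++ x) _ _⟩

theorem tandems_eq_image (m n : ℕ) :
    tandems m n = Function.uncurry tandemOfWords ''
      ({x | x ≠ [] ∧ x ++ x <:+: fibWord n} ×ˢ {y | y ≠ [] ∧ y <:+: fibWord m}) := by
  ext s
  constructor
  · obtain ⟨r, l, X⟩ := s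
    rintro ⟨hr, hl, hocc, htandem⟩
    dsimp only at hr hl hocc htandem
    obtain ⟨y, z, hy, rfl, hz, hzl, rfl⟩ := occursIn_iff.1 hocc
    obtain ⟨x, rfl⟩ := List.exists_eq_append_self_of_getD 0 hzl fun i hi =>
      congrArg Prod.snd (htandem ⟨0, hr⟩ ⟨i, hi⟩)
    obtain rfl : x.length = l := by simp at hzl; omega
    exact ⟨(x, y),
      ⟨⟨List.ne_nil_of_length_pos hl, hz⟩, List.ne_nil_of_length_pos hr, hy⟩, rfl⟩
  · rintro ⟨⟨x, y⟩, ⟨⟨hx, hxx⟩, hy, hym⟩, rfl⟩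
    refine ⟨List.length_pos_iff.2 hy, List.length_pos_iff.2 hx,
      occursIn_iff.2 ⟨y, x ++ x, hym, rfl, hxx, by simp [tandemOfWords, two_mul], rfl⟩,
      fun p q => ?_⟩
    simp only [Function.uncurry, tandemOfWords, prodArr]
    rw [List.getD_append _ _ _ _ q.2, List.getD_append_right _ _ _ _ (Nat.le_add_left _ _),
      Nat.add_sub_cancel]

theorem DoubleWidthArray.entry_eq_of_eq {r l r' l' : ℕ}
    {X : Fin r × Fin (2 * l) → Fin 2 × Fin 2} {X' : Fin r' × Fin (2 * l') → Fin 2 × Fin 2}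
    (h : (⟨r, l, X⟩ : DoubleWidthArray) = ⟨r', l', X'⟩) :
    r = r' ∧ l = l' ∧ ∀ i j (hi : i < r) (hj : j < 2 * l) (hi' : i < r') (hj' : j < 2 * l'),
      X (⟨i, hi⟩, ⟨j, hj⟩) = X' (⟨i, hi'⟩, ⟨j, hj'⟩) := by
  cases h
  exact ⟨rfl, rfl, fun _ _ _ _ _ _ => rfl⟩

theorem tandemOfWords_injOn :
    Set.InjOn (Function.uncurry tandemOfWords) ({x | x ≠ []} ×ˢ {y | y ≠ []}) := by
  rintro ⟨x, y⟩ ⟨hx, hy⟩ ⟨x', y'⟩ - h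
  obtain ⟨hy', hx', hentry⟩ := DoubleWidthArray.entry_eq_of_eq h
  dsimp only at hy' hx' hentry
  have hx0 : 0 < x.length := List.length_pos_iff.2 hx
  have hy0 : 0 < y.length := List.length_pos_iff.2 hy
  simp only [prodArr] at hentry
  congr 1
  · refine List.ext_getElem hx' fun i h₁ h₂ => ?_
    have := congrArg Prod.snd (hentry 0 i hy0 (by omega) (by omega) (by omega))
    rwa [List.getD_append _ _ _ _ h₁, List.getD_append _ _ _ _ h₂,
      List.getD_eq_getElem _ _ h₁, List.getD_eq_getElem _ _ h₂] at this
  · refine List.ext_getElem hy' fun i h₁ h₂ => ?_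
    have := congrArg Prod.fst (hentry i 0 h₁ (by omega) h₂ (by omega))
    rwa [List.getD_eq_getElem _ _ h₁, List.getD_eq_getElem _ _ h₂] at this

/-- For m ≥ 2 and n ≥ 5, the number of distinct Type I(a) tandems in f_{m,n}
(counted over all sizes (r,2l), r,l ≥ 1: distinct r × 2l arrays X occurring in f_{m,n}
whose left r × l half equals its right r × l half) equals D(n)·p(f_m). -/
theorem stmt8 (m n : ℕ) :
    {x : (r : ℕ) × (l : ℕ) × (Fin r × Fin (2 * l) → Fin 2 × Fin 2) |
      1 ≤ x.1 ∧ 1 ≤ x.2.1 ∧ occursIn m n x.1 (2 * x.2.1) x.2.2 ∧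
      ∀ (p : Fin x.1) (q : Fin x.2.1),
        x.2.2 (p, ⟨q.val, by have := q.isLt; omega⟩)
          = x.2.2 (p, ⟨q.val + x.2.1, by have := q.isLt; omega⟩)}.ncard
      = D n * pFact (fibWord m) := by
  change (tandems m n).ncard = _
  rw [tandems_eq_image, Set.InjOn.ncard_image, Set.ncard_prod]
  · rfl
  · exact tandemOfWords_injOn.mono (Set.prod_mono (fun _ h => h.1) fun _ h => h.1)
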